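/- Let S be a finite subset of the positive integers, let w be a permutation of S, and let v = v_1 v_2 ⋯ v_k be the canonical block decomposition of the class ⟨w⟩ (each v_i an increasing or decreasing run of consecutive integers such that every u ∼ w decomposes into blocks equivalent to the v_i). If m_i is the length of block v_i, then #⟨w⟩ = F_{m_1 + 1} · F_{m_2 + 1} ⋯ F_{m_k + 1}, a product of Fibonacci numbers. -/

import Mathlib

/-- One interchange of two adjacent entries of a word whose values differ by exactly 1. -/
def AdjSwap1 (u v : List ℕ) : Prop :=
  ∃ (p q : List ℕ) (x y : ℕ), ((x : ℤ) - (y : ℤ)).natAbs = 1 ∧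
    u = p ++ x :: y :: q ∧ v = p ++ y :: x :: q

/-- A (nonempty) block which is an increasing or decreasing sequence of
consecutive integers. -/
def ConsecRun (l : List ℕ) : Prop :=
  l ≠ [] ∧ (l.Chain' (fun a b => b = a + 1) ∨ l.Chain' (fun a b => a = b + 1))

/-- `Decomposes v w` says: every `u ∼ w` has the form `u = v'₁ v'₂ ⋯ v'ₖ` where
`v'ᵢ ∼ vᵢ`. -/
def Decomposes (v : List (List ℕ)) (w : List ℕ) : Prop :=
  ∀ u : List ℕ, Relation.EqvGen AdjSwap1 w u →
    ∃ v' : List (List ℕ), u = v'.flatten ∧ v'.length = v.length ∧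
      ∀ (idx : ℕ) (h1 : idx < v.length) (h2 : idx < v'.length),
        Relation.EqvGen AdjSwap1 (v.get ⟨idx, h1⟩) (v'.get ⟨idx, h2⟩)

/-!
By the block decomposition, `⟨w⟩` is the set of concatenations `u₁ ⋯ uₖ` with `uᵢ ∼ vᵢ`; since
equivalent words have equal lengths, the factors are determined by the concatenation and
`#⟨w⟩ = ∏ #⟨vᵢ⟩`. Reversal reduces a decreasing run to an increasing one. The class of the run
`a, a+1, …, a+m-1` consists of the words obtained from it by transposing some disjoint pairs of
neighbours, i.e. of the tilings of a strip of length `m` by monominoes and dominoes, and these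
are counted by `F_{m+1}`.
-/

open Relation List

namespace Relation.EqvGen

variable {α β : Type*} {r : α → α → Prop} {a b : α}

theorem lift {p : β → β → Prop} (f : α → β) (h : ∀ x y, r x y → p (f x) (f y))
    (hab : EqvGen r a b) : EqvGen p (f a) (f b) :=
  eqvGen_le (r' := f ⁻¹'o EqvGen p) (fun x y hr => .rel _ _ (h x y hr)) a b hab

theorem apply_eq {f : α → β} (h : ∀ x y, r x y → f x = f y) (hab : EqvGen r a b) :
    f a = f b :=
  eqvGen_le (r' := f ⁻¹'o (· = ·)) h a b hab

end Relation.EqvGen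

local infix:50 " ∼ " => Relation.EqvGen AdjSwap1

namespace AdjSwap1

variable {u u' : List ℕ}

theorem symm (h : AdjSwap1 u u') : AdjSwap1 u' u := by
  obtain ⟨p, q, x, y, hxy, rfl, rfl⟩ := h
  exact ⟨p, q, y, x, by omega, rfl, rfl⟩

theorem length_eq (h : AdjSwap1 u u') : u.length = u'.length := by
  obtain ⟨p, q, x, y, -, rfl, rfl⟩ := h
  simp

theorem append (p q : List ℕ) (h : AdjSwap1 u u') : AdjSwap1 (p ++ u ++ q) (p ++ u' ++ q) := by
  obtain ⟨p', q', x, y, hxy, rfl, rfl⟩ := h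
  exact ⟨p ++ p', q' ++ q, x, y, hxy, by simp, by simp⟩

theorem reverse (h : AdjSwap1 u u') : AdjSwap1 u.reverse u'.reverse := by
  obtain ⟨p, q, x, y, hxy, rfl, rfl⟩ := h
  exact ⟨q.reverse, p.reverse, y, x, by omega, by simp, by simp⟩

theorem eqvGen_length_eq (h : u ∼ u') : u.length = u'.length :=
  EqvGen.apply_eq (fun _ _ => length_eq) h

theorem eqvGen_append (p q : List ℕ) (h : u ∼ u') : p ++ u ++ q ∼ p ++ u' ++ q :=
  EqvGen.lift (p ++ · ++ q) (fun _ _ => append p q) h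

theorem eqvGen_reverse (h : u ∼ u') : u.reverse ∼ u'.reverse :=
  EqvGen.lift List.reverse (fun _ _ => reverse) h

theorem eqvGen_flatten {v L : List (List ℕ)} (h : Forall₂ (· ∼ ·) v L) :
    v.flatten ∼ L.flatten := by
  induction h with
  | nil => exact .refl _
  | @cons b x v L hb _ ih =>
    have hhead : b ++ v.flatten ∼ x ++ v.flatten := by
      simpa using eqvGen_append [] v.flatten hb
    have htail : x ++ v.flatten ∼ x ++ L.flatten := by
      simpa using eqvGen_append x [] ih
    exact .trans _ _ _ hhead htail

end AdjSwap1

/-- `TiledRun a u`: `u` is the run `a, a+1, …, a+|u|-1` with some disjoint pairs of neighbours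
transposed; the untouched entries and the transposed pairs tile the positions of `u` by
monominoes and dominoes. -/
inductive TiledRun : ℕ → List ℕ → Prop
  | nil (a : ℕ) : TiledRun a []
  | mono {a : ℕ} {l : List ℕ} : TiledRun (a + 1) l → TiledRun a (a :: l)
  | domino {a : ℕ} {l : List ℕ} : TiledRun (a + 2) l → TiledRun a ((a + 1) :: a :: l)

namespace TiledRun

theorem range' (a m : ℕ) : TiledRun a (List.range' a m) := by
  induction m generalizing a with
  | zero => exact .nil a
  | succ m ih => exact .mono (ih (a + 1))

theorem head_eq {a z : ℕ} {l : List ℕ} (h : TiledRun a (z :: l)) : z = a ∨ z = a + 1 := by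
  cases h
  · exact .inl rfl
  · exact .inr rfl

theorem of_cons_self {a : ℕ} {l : List ℕ} (h : TiledRun a (a :: l)) : TiledRun (a + 1) l := by
  cases h with
  | mono h => exact h

theorem eqvGen_range' {a : ℕ} {u : List ℕ} (h : TiledRun a u) : List.range' a u.length ∼ u := by
  induction h with
  | nil => exact .refl _
  | @mono a l _ ih => simpa [List.range'_succ] using AdjSwap1.eqvGen_append [a] [] ih
  | @domino a l _ ih =>
    have hswap : AdjSwap1 (a :: (a + 1) :: List.range' (a + 2) l.length)
        ((a + 1) :: a :: List.range' (a + 2) l.length) :=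
      ⟨[], _, a, a + 1, by omega, rfl, rfl⟩
    have htail := AdjSwap1.eqvGen_append [a + 1, a] [] ih
    simp only [List.cons_append, List.nil_append, List.append_nil] at htail
    simpa [List.range'_succ] using EqvGen.trans _ _ _ (.rel _ _ hswap) htail

/-- Neighbours on either side of a domino differ by at least two, so a swap either merges two
monominoes into a domino or splits a domino. -/
theorem of_adjSwap1 {a : ℕ} {u u' : List ℕ} (h : TiledRun a u) (hs : AdjSwap1 u u') :
    TiledRun a u' := by
  induction h generalizing u' with
  | nil => obtain ⟨p, q, x, y, -, hu, -⟩ := hs; simp at hu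
  | @mono a l hl ih =>
    obtain ⟨p, q, x, y, hxy, hu, rfl⟩ := hs
    rcases p with _ | ⟨z, p⟩
    · obtain ⟨rfl, rfl⟩ : x = a ∧ y :: q = l := by simpa using hu.symm
      rcases hl.head_eq with rfl | rfl
      · exact .domino hl.of_cons_self
      · omega
    · obtain ⟨rfl, rfl⟩ : z = a ∧ p ++ x :: y :: q = l := by simpa using hu.symm
      exact .mono (ih ⟨p, q, x, y, hxy, rfl, rfl⟩)
  | @domino a l hl ih =>
    obtain ⟨p, q, x, y, hxy, hu, rfl⟩ := hs
    rcases p with _ | ⟨z, _ | ⟨z', p⟩⟩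
    · obtain ⟨rfl, rfl, rfl⟩ : x = a + 1 ∧ y = a ∧ q = l := by simpa using hu.symm
      exact .mono (.mono hl)
    · obtain ⟨rfl, rfl, rfl⟩ : z = a + 1 ∧ x = a ∧ y :: q = l := by simpa using hu.symm
      rcases hl.head_eq with rfl | rfl <;> omega
    · obtain ⟨rfl, rfl, rfl⟩ : z = a + 1 ∧ z' = a ∧ p ++ x :: y :: q = l := by
        simpa using hu.symm
      exact .domino (ih ⟨p, q, x, y, hxy, rfl, rfl⟩)

theorem iff_of_eqvGen {a : ℕ} {u u' : List ℕ} (h : u ∼ u') : TiledRun a u ↔ TiledRun a u' :=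
  Iff.of_eq <| EqvGen.apply_eq
    (fun _ _ hs => propext ⟨fun ht => ht.of_adjSwap1 hs, fun ht => ht.of_adjSwap1 hs.symm⟩) h

end TiledRun

def tiledRuns (a m : ℕ) : Set (List ℕ) := {u | TiledRun a u ∧ u.length = m}

theorem setOf_range'_eqvGen (a m : ℕ) : {u | List.range' a m ∼ u} = tiledRuns a m := by
  ext u
  constructor
  · intro h
    exact ⟨(TiledRun.iff_of_eqvGen h).1 (.range' a m),
      by simpa using (AdjSwap1.eqvGen_length_eq h).symm⟩
  · rintro ⟨hu, rfl⟩
    exact hu.eqvGen_range'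

theorem tiledRuns_zero (a : ℕ) : tiledRuns a 0 = {[]} := by
  ext u
  simp only [tiledRuns, Set.mem_ofPred_eq, Set.mem_singleton_iff, List.length_eq_zero_iff,
    and_iff_right_iff_imp]
  rintro rfl
  exact .nil a

theorem tiledRuns_one (a : ℕ) : tiledRuns a 1 = {[a]} := by
  ext u
  simp only [tiledRuns, Set.mem_ofPred_eq, Set.mem_singleton_iff]
  constructor
  · rintro ⟨hu | hu | hu, hlen⟩ <;> simp_all
  · rintro rfl
    exact ⟨.mono (.nil _), rfl⟩

theorem tiledRuns_add_two (a m : ℕ) :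
    tiledRuns a (m + 2) =
      (a :: ·) '' tiledRuns (a + 1) (m + 1) ∪ ((a + 1) :: a :: ·) '' tiledRuns (a + 2) m := by
  ext u
  simp only [tiledRuns, Set.mem_union, Set.mem_image, Set.mem_ofPred_eq]
  constructor
  · rintro ⟨_ | @⟨_, l, hl⟩ | @⟨_, l, hl⟩, hlen⟩
    · simp at hlen
    · exact .inl ⟨l, ⟨hl, by simpa using hlen⟩, rfl⟩
    · exact .inr ⟨l, ⟨hl, by simpa using hlen⟩, rfl⟩
  · rintro (⟨l, ⟨hl, hlen⟩, rfl⟩ | ⟨l, ⟨hl, hlen⟩, rfl⟩)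
    · exact ⟨.mono hl, by simp [hlen]⟩
    · exact ⟨.domino hl, by simp [hlen]⟩

theorem encard_tiledRuns (a m : ℕ) : (tiledRuns a m).encard = Nat.fib (m + 1) := by
  match m with
  | 0 => simp [tiledRuns_zero]
  | 1 => simp [tiledRuns_one]
  | m + 2 =>
    have hdisj : Disjoint ((a :: ·) '' tiledRuns (a + 1) (m + 1))
        (((a + 1) :: a :: ·) '' tiledRuns (a + 2) m) := by
      simp only [Set.disjoint_left, Set.mem_image]
      rintro _ ⟨l, -, rfl⟩ ⟨l', -, h⟩
      simp at h
    have hinj : Function.Injective ((a + 1) :: a :: · : List ℕ → List ℕ) :=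
      fun l l' h => by simpa using h
    rw [tiledRuns_add_two, Set.encard_union_eq hdisj, List.cons_injective.encard_image,
      hinj.encard_image, encard_tiledRuns, encard_tiledRuns, Nat.fib_add_two (n := m + 1)]
    push_cast
    ring

theorem encard_setOf_range'_eqvGen (a m : ℕ) :
    {u | List.range' a m ∼ u}.encard = Nat.fib (m + 1) := by
  rw [setOf_range'_eqvGen, encard_tiledRuns]

theorem setOf_reverse_eqvGen (b : List ℕ) :
    {u | b.reverse ∼ u} = List.reverse '' {u | b ∼ u} := by
  ext u
  constructor
  · intro h
    exact ⟨u.reverse, by simpa using AdjSwap1.eqvGen_reverse h, u.reverse_reverse⟩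
  · rintro ⟨u, h, rfl⟩
    exact AdjSwap1.eqvGen_reverse h

theorem List.eq_range'_of_isChain_succ {l : List ℕ} (h : l.IsChain (fun a b => b = a + 1)) :
    l = List.range' l.headI l.length := by
  induction l with
  | nil => rfl
  | cons x l ih =>
    rcases l with _ | ⟨y, l⟩
    · rfl
    · obtain ⟨rfl, hl⟩ := List.isChain_cons_cons.1 h
      conv_lhs => rw [ih hl]
      rfl

theorem ConsecRun.encard_setOf_eqvGen {b : List ℕ} (hb : ConsecRun b) :
    {u | b ∼ u}.encard = Nat.fib (b.length + 1) := by
  obtain ⟨-, hinc | hdec⟩ := hb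
  · have := encard_setOf_range'_eqvGen b.headI b.length
    rwa [← List.eq_range'_of_isChain_succ hinc] at this
  · have hinc : b.reverse.IsChain (fun a b => b = a + 1) := List.isChain_reverse.2 hdec
    have := encard_setOf_range'_eqvGen b.reverse.headI b.reverse.length
    rwa [← List.eq_range'_of_isChain_succ hinc, setOf_reverse_eqvGen,
      List.reverse_injective.encard_image, List.length_reverse] at this

def concatClasses (v : List (List ℕ)) : Set (List ℕ) :=
  {u | ∃ L, Forall₂ (· ∼ ·) v L ∧ u = L.flatten}

theorem concatClasses_nil : concatClasses [] = {[]} := by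
  ext u
  simp [concatClasses, List.forall₂_nil_left_iff]

theorem concatClasses_cons (b : List ℕ) (v : List (List ℕ)) :
    concatClasses (b :: v) =
      (fun p : List ℕ × List ℕ => p.1 ++ p.2) '' ({x | b ∼ x} ×ˢ concatClasses v) := by
  ext u
  simp only [concatClasses, List.forall₂_cons_left_iff, Set.mem_ofPred_eq, Set.mem_image,
    Set.mem_prod, Prod.exists]
  constructor
  · rintro ⟨_, ⟨x, L, hx, hL, rfl⟩, rfl⟩
    exact ⟨x, L.flatten, ⟨hx, L, hL, rfl⟩, rfl⟩
  · rintro ⟨x, _, ⟨hx, L, hL, rfl⟩, rfl⟩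
    exact ⟨x :: L, ⟨x, L, hx, hL, rfl⟩, rfl⟩

theorem encard_concatClasses (v : List (List ℕ)) :
    (concatClasses v).encard = (v.map fun b => {u | b ∼ u}.encard).prod := by
  induction v with
  | nil => simp [concatClasses_nil]
  | cons b v ih =>
    have hinj : Set.InjOn (fun p : List ℕ × List ℕ => p.1 ++ p.2)
        ({x | b ∼ x} ×ˢ concatClasses v) := by
      rintro ⟨x, y⟩ ⟨hx, -⟩ ⟨x', y'⟩ ⟨hx', -⟩ hxy
      have hlen : x.length = x'.length :=
        (AdjSwap1.eqvGen_length_eq hx).symm.trans (AdjSwap1.eqvGen_length_eq hx')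
      obtain ⟨rfl, rfl⟩ := List.append_inj hxy hlen
      rfl
    rw [concatClasses_cons, hinj.encard_image, Set.encard_prod, ih, List.map_cons,
      List.prod_cons]

theorem stmt10_general (w : List ℕ) (v : List (List ℕ))
    (hv : Relation.EqvGen AdjSwap1 w v.flatten)
    (hruns : ∀ b ∈ v, ConsecRun b)
    (hdec : Decomposes v w) :
    Set.ncard {u : List ℕ | Relation.EqvGen AdjSwap1 w u} =
      (v.map fun b => Nat.fib (b.length + 1)).prod := by
  have hclass : {u | w ∼ u} = concatClasses v := by
    ext u
    constructor
    · intro hu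
      obtain ⟨L, rfl, hlen, hblocks⟩ := hdec u hu
      exact ⟨L, List.forall₂_iff_get.2 ⟨hlen.symm, hblocks⟩, rfl⟩
    · rintro ⟨L, hL, rfl⟩
      exact .trans _ _ _ hv (AdjSwap1.eqvGen_flatten hL)
  rw [Set.ncard_def, hclass, encard_concatClasses,
    List.map_congr_left fun b hb => (hruns b hb).encard_setOf_eqvGen]
  rw [← ENat.toNat_natCast (v.map _).prod, Nat.cast_list_prod, List.map_map]
  rfl

/-- Let `w` be a permutation of a finite set of positive integers and let
`v = v₁ ⋯ vₖ` be the canonical block decomposition of its class `⟨w⟩`: each `vᵢ`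
is an increasing or decreasing run of consecutive integers and every `u ∼ w`
decomposes into blocks equivalent to the `vᵢ`. If `mᵢ` is the length of `vᵢ`, then
`#⟨w⟩ = F_{m₁+1} F_{m₂+1} ⋯ F_{mₖ+1}`, a product of Fibonacci numbers. -/
theorem stmt10 (w : List ℕ) (hpos : ∀ x ∈ w, 0 < x) (hnd : w.Nodup)
    (v : List (List ℕ))
    (hv : Relation.EqvGen AdjSwap1 w v.flatten)
    (hruns : ∀ b ∈ v, ConsecRun b)
    (hdec : Decomposes v w) :
    Set.ncard {u : List ℕ | Relation.EqvGen AdjSwap1 w u} =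
      (v.map fun b => Nat.fib (b.length + 1)).prod :=
  stmt10_general w v hv hruns hdec
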